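/- arXiv:1512.01383 — 2 statements merged into one kernel-verified Lean document; each statement's English description precedes it below -/
import Mathlib

section
/- Let k ≥ 1, let γ_1 < γ_2 < … < γ_{k+1} be real labels, and let ρ : ℝ → ℝ. The convex biconjugate of the lifted dataterm ρ_lift := min_{1≤i≤k} ρ_i satisfies, for every u ∈ ℝ^k, ρ_lift^{**}(u) = sup_{v ∈ ℝ^k} ( ⟨u, v⟩ − max_{1 ≤ i ≤ k} ρ_i^*(v) ), where ρ_i^*(v) = ⟨1_{i−1}, v⟩ − (γ_i/(γ_{i+1} − γ_i))·v_i + (ρ + δ_{[γ_i, γ_{i+1}]})^*( v_i/(γ_{i+1} − γ_i) ). -/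
/-- Dot product (inner product) on ℝ^k. -/
noncomputable def dotk {k : ℕ} (v u : Fin k → ℝ) : ℝ := ∑ j, v j * u j

/-- Convex conjugate of an extended-real-valued function on ℝ^k:
`f^*(v) = sup_u ⟨v,u⟩ - f(u)`. -/
noncomputable def conjV {k : ℕ} (f : (Fin k → ℝ) → EReal) (v : Fin k → ℝ) : EReal :=
  ⨆ u : Fin k → ℝ, (dotk v u : EReal) - f u

/-- The vector `1_i` : first `i` entries 1, remaining entries 0 (so `onevec k 0 = 0`). -/
noncomputable def onevec (k : ℕ) (i : ℕ) : Fin k → ℝ := fun j => if (j : ℕ) < i then 1 else 0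

/-- `1_i^α` (with 0-based interval index `i`): first `i` entries 1, entry `i` equals `α`,
remaining entries 0.  This is `α • 1_{i+1} + (1-α) • 1_i` in the 0-based numbering of `onevec`. -/
noncomputable def liftvec {k : ℕ} (i : Fin k) (α : ℝ) : Fin k → ℝ :=
  fun j => if (j : ℕ) < (i : ℕ) then 1 else if j = i then α else 0

/-- `γ_i^α = γ_i + α (γ_{i+1} - γ_i)`, with 0-based interval index `i`. -/
noncomputable def gammaAff {k : ℕ} (γ : Fin (k+1) → ℝ) (i : Fin k) (α : ℝ) : ℝ :=
  γ i.castSucc + α * (γ i.succ - γ i.castSucc)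

/-- The lifted piece `ρ_i` : equals `ρ(γ_i^α)` if `u = 1_i^α` for some `α ∈ [0,1]`,
and `+∞` otherwise (the set below is a singleton or empty, and `sInf ∅ = ⊤` in `EReal`). -/
noncomputable def rhoPiece {k : ℕ} (γ : Fin (k+1) → ℝ) (ρ : ℝ → ℝ) (i : Fin k)
    (u : Fin k → ℝ) : EReal :=
  sInf {c : EReal | ∃ α ∈ Set.Icc (0:ℝ) 1, u = liftvec i α ∧ c = (ρ (gammaAff γ i α) : EReal)}

/-- Scalar convex conjugate: `f^*(v) = sup_u (v·u - f(u))`. -/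
noncomputable def conj1 (f : ℝ → EReal) (v : ℝ) : EReal :=
  ⨆ u : ℝ, ((v * u : ℝ) : EReal) - f u

/-- `ρ + δ_{[a,b]}` : equals `ρ` on `[a,b]` and `+∞` elsewhere. -/
noncomputable def rhoRestr (ρ : ℝ → ℝ) (a b : ℝ) : ℝ → EReal :=
  fun t => if t ∈ Set.Icc a b then (ρ t : EReal) else ⊤

/-!
Conjugation turns the pointwise minimum `min_i ρ_i` into the pointwise maximum of the `ρ_i^*`,
so only the conjugate of a single piece has to be computed. The piece `ρ_i` is finite only on
the segment `α ↦ 1_i^α`, `α ∈ [0,1]`, so `ρ_i^*(v)` is a supremum over `α`. Along this segment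
`⟨v, 1_i^α⟩ = ⟨1_{i-1}, v⟩ + α v_i` is affine in `t = γ_i^α`, and the substitution
`α ↦ γ_i^α`, a bijection of `ℝ` carrying `[0,1]` onto `[γ_i, γ_{i+1}]`, turns that supremum into
the scalar conjugate of `ρ + δ_{[γ_i, γ_{i+1}]}` at `v_i / (γ_{i+1} - γ_i)`.
-/

namespace EReal

lemma neg_iInf {ι : Sort*} (f : ι → EReal) : -(⨅ i, f i) = ⨆ i, -f i :=
  negOrderIso.map_iInf f

noncomputable def addRightOrderIso (d : ℝ) : EReal ≃o EReal where
  toFun x := x + d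
  invFun x := x - d
  left_inv _ := add_sub_cancel_right
  right_inv _ := sub_add_cancel
  map_rel_iff' := (addLECancellable_coe d).add_le_add_iff_right

lemma coe_add_iSup {ι : Sort*} (d : ℝ) (f : ι → EReal) :
    (d : EReal) + ⨆ i, f i = ⨆ i, (d : EReal) + f i := by
  rw [add_comm]
  exact ((addRightOrderIso d).map_iSup f).trans (iSup_congr fun i => add_comm _ _)

lemma coe_sub_iInf {ι : Sort*} (d : ℝ) (f : ι → EReal) :
    (d : EReal) - ⨅ i, f i = ⨆ i, (d : EReal) - f i := by
  simp only [sub_eq_add_neg, neg_iInf, coe_add_iSup]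

end EReal

lemma conjV_iInf {k : ℕ} {ι : Sort*} (f : ι → (Fin k → ℝ) → EReal) (v : Fin k → ℝ) :
    conjV (fun u => ⨅ i, f i u) v = ⨆ i, conjV (f i) v := by
  simp only [conjV, EReal.coe_sub_iInf]
  exact iSup_comm

lemma conjV_eq_iSup_comp {k : ℕ} {ι : Sort*} {f : (Fin k → ℝ) → EReal} (g : ι → Fin k → ℝ)
    (hf : ∀ u ∉ Set.range g, f u = ⊤) (v : Fin k → ℝ) :
    conjV f v = ⨆ j, (dotk v (g j) : EReal) - f (g j) := by
  refine le_antisymm (iSup_le fun u => ?_) (iSup_le fun j => le_iSup_of_le (g j) le_rfl)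
  by_cases hu : u ∈ Set.range g
  · obtain ⟨j, rfl⟩ := hu
    exact le_iSup_of_le j le_rfl
  · simp [hf u hu]

lemma conj1_eq_iSup_comp {f : ℝ → EReal} {φ : ℝ → ℝ} (hφ : φ.Surjective) (s : ℝ) :
    conj1 f s = ⨆ α, ((s * φ α : ℝ) : EReal) - f (φ α) :=
  (hφ.iSup_comp fun t => ((s * t : ℝ) : EReal) - f t).symm

lemma liftvec_injective {k : ℕ} (i : Fin k) : (liftvec i).Injective := fun α β h => by
  simpa [liftvec] using congrFun h i

lemma dotk_liftvec {k : ℕ} (i : Fin k) (α : ℝ) (v : Fin k → ℝ) :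
    dotk v (liftvec i α) = dotk (onevec k i) v + α * v i := by
  have hterm : ∀ j : Fin k, v j * liftvec i α j
      = onevec k i j * v j + if j = i then α * v i else 0 := by
    intro j
    rcases lt_trichotomy (j : ℕ) i with h | h | h
    · simp [liftvec, onevec, h, Fin.ne_of_val_ne h.ne]
    · obtain rfl := Fin.ext h
      simp [liftvec, onevec, mul_comm]
    · simp [liftvec, onevec, not_lt.2 h.le, Fin.ne_of_val_ne h.ne']
  simp only [dotk, hterm, Finset.sum_add_distrib, Finset.sum_ite_eq', Finset.mem_univ, if_true]

lemma rhoPiece_liftvec {k : ℕ} (γ : Fin (k+1) → ℝ) (ρ : ℝ → ℝ) (i : Fin k) (α : ℝ) :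
    rhoPiece γ ρ i (liftvec i α) =
      if α ∈ Set.Icc (0:ℝ) 1 then (ρ (gammaAff γ i α) : EReal) else ⊤ := by
  simp only [rhoPiece, (liftvec_injective i).eq_iff]
  split_ifs with h <;> simp [h]

lemma rhoPiece_eq_top_of_notMem_range {k : ℕ} (γ : Fin (k+1) → ℝ) (ρ : ℝ → ℝ) (i : Fin k)
    {u : Fin k → ℝ} (hu : u ∉ Set.range (liftvec i)) : rhoPiece γ ρ i u = ⊤ := by
  refine sInf_eq_top.2 ?_
  rintro c ⟨α, -, rfl, -⟩
  exact absurd ⟨α, rfl⟩ hu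

section gammaAff

variable {k : ℕ} {γ : Fin (k+1) → ℝ} {i : Fin k}

lemma gammaAff_mem_Icc_iff (h : γ i.castSucc < γ i.succ) {α : ℝ} :
    gammaAff γ i α ∈ Set.Icc (γ i.castSucc) (γ i.succ) ↔ α ∈ Set.Icc 0 1 := by
  have hd : 0 < γ i.succ - γ i.castSucc := sub_pos.2 h
  simp only [Set.mem_Icc, gammaAff]
  constructor <;> rintro ⟨h0, h1⟩ <;> constructor <;> nlinarith

lemma gammaAff_surjective (h : γ i.castSucc ≠ γ i.succ) : (gammaAff γ i).Surjective := by
  have hd : γ i.succ - γ i.castSucc ≠ 0 := sub_ne_zero.2 h.symm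
  intro t
  refine ⟨(t - γ i.castSucc) / (γ i.succ - γ i.castSucc), ?_⟩
  simp only [gammaAff]
  field_simp
  ring

lemma dotk_liftvec_eq_add_mul_gammaAff (h : γ i.castSucc ≠ γ i.succ) (α : ℝ)
    (v : Fin k → ℝ) :
    dotk v (liftvec i α)
      = (dotk (onevec k i) v - γ i.castSucc / (γ i.succ - γ i.castSucc) * v i)
        + v i / (γ i.succ - γ i.castSucc) * gammaAff γ i α := by
  have hd : γ i.succ - γ i.castSucc ≠ 0 := sub_ne_zero.2 h.symm
  rw [dotk_liftvec, gammaAff]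
  field_simp
  ring

lemma rhoPiece_liftvec_eq_rhoRestr (ρ : ℝ → ℝ) (h : γ i.castSucc < γ i.succ) (α : ℝ) :
    rhoPiece γ ρ i (liftvec i α) = rhoRestr ρ (γ i.castSucc) (γ i.succ) (gammaAff γ i α) := by
  simp only [rhoPiece_liftvec, rhoRestr, gammaAff_mem_Icc_iff h]

lemma conjV_rhoPiece (ρ : ℝ → ℝ) (h : γ i.castSucc < γ i.succ) (v : Fin k → ℝ) :
    conjV (rhoPiece γ ρ i) v
      = (((dotk (onevec k i) v - γ i.castSucc / (γ i.succ - γ i.castSucc) * v i : ℝ) : EReal)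
          + conj1 (rhoRestr ρ (γ i.castSucc) (γ i.succ))
              (v i / (γ i.succ - γ i.castSucc))) := by
  rw [conjV_eq_iSup_comp (liftvec i) (fun _ => rhoPiece_eq_top_of_notMem_range γ ρ i) v,
    conj1_eq_iSup_comp (gammaAff_surjective h.ne), EReal.coe_add_iSup]
  refine iSup_congr fun α => ?_
  rw [dotk_liftvec_eq_add_mul_gammaAff h.ne, rhoPiece_liftvec_eq_rhoRestr ρ h, EReal.coe_add,
    add_sub_assoc]

end gammaAff

theorem biconj_rhoLift_eq_general {k : ℕ} (γ : Fin (k+1) → ℝ) (hγ : StrictMono γ)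
    (ρ : ℝ → ℝ) (u : Fin k → ℝ) :
    conjV (conjV (fun w => ⨅ i : Fin k, rhoPiece γ ρ i w)) u
      = ⨆ v : Fin k → ℝ, (dotk u v : EReal)
          - ⨆ i : Fin k,
              (((dotk (onevec k (i : ℕ)) v
                  - (γ i.castSucc / (γ i.succ - γ i.castSucc)) * v i : ℝ) : EReal)
                + conj1 (rhoRestr ρ (γ i.castSucc) (γ i.succ))
                    (v i / (γ i.succ - γ i.castSucc))) := by
  have hpiece (i : Fin k) := conjV_rhoPiece ρ (hγ i.castSucc_lt_succ)
  rw [conjV]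
  simp only [conjV_iInf, hpiece]

/-- Proposition 1. The biconjugate of the lifted dataterm
`ρ_lift = min_i ρ_i` satisfies
`ρ_lift^{**}(u) = sup_v ( ⟨u,v⟩ - max_i ρ_i^*(v) )`, where `ρ_i^*(v)` is given by the
explicit formula
`⟨1_{i-1}, v⟩ - (γ_i/(γ_{i+1}-γ_i))·v_i + (ρ + δ_{[γ_i,γ_{i+1}]})^*(v_i/(γ_{i+1}-γ_i))`. -/
theorem biconj_rhoLift_eq {k : ℕ} (hk : 1 ≤ k) (γ : Fin (k+1) → ℝ) (hγ : StrictMono γ)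
    (ρ : ℝ → ℝ) (u : Fin k → ℝ) :
    conjV (conjV (fun w => ⨅ i : Fin k, rhoPiece γ ρ i w)) u
      = ⨆ v : Fin k → ℝ, (dotk u v : EReal)
          - ⨆ i : Fin k,
              (((dotk (onevec k (i : ℕ)) v
                  - (γ i.castSucc / (γ i.succ - γ i.castSucc)) * v i : ℝ) : EReal)
                + conj1 (rhoRestr ρ (γ i.castSucc) (γ i.succ))
                    (v i / (γ i.succ - γ i.castSucc))) :=
  biconj_rhoLift_eq_general γ hγ ρ u
end

section
/- Let k ≥ 1, d ≥ 1, and let γ_1 < γ_2 < … < γ_{k+1} be real labels. Define Φ := min_{1 ≤ j ≤ i ≤ k} Φ_{i,j} on ℝ^{k×d}. Then the convex biconjugate of Φ with respect to the Frobenius inner product is the support function of the set K: for every g ∈ ℝ^{k×d}, Φ^{**}(g) = sup_{q ∈ K} ⟨q, g⟩, where K = { q ∈ ℝ^{k×d} : ‖q^T(1_i^α − 1_j^β)‖_2 ≤ |γ_i^α − γ_j^β| for all 1 ≤ j ≤ i ≤ k and all α, β ∈ [0,1] }. -/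
/-- Frobenius inner product on ℝ^{k×d}. -/
noncomputable def pairM {k d : ℕ} (q g : Fin k → Fin d → ℝ) : ℝ := ∑ m, ∑ l, q m l * g m l

/-- Convex conjugate on ℝ^{k×d} w.r.t. the Frobenius inner product. -/
noncomputable def conjM {k d : ℕ} (f : (Fin k → Fin d → ℝ) → EReal)
    (q : Fin k → Fin d → ℝ) : EReal :=
  ⨆ g : Fin k → Fin d → ℝ, (pairM q g : EReal) - f g

/-- Euclidean norm on ℝ^d. -/
noncomputable def enorm2 {d : ℕ} (x : Fin d → ℝ) : ℝ := Real.sqrt (∑ l, x l ^ 2)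

/-- `q^T v ∈ ℝ^d` for `q ∈ ℝ^{k×d}`, `v ∈ ℝ^k`. -/
noncomputable def matT {k d : ℕ} (q : Fin k → Fin d → ℝ) (v : Fin k → ℝ) : Fin d → ℝ :=
  fun l => ∑ m, q m l * v m

/-- `Φ_{i,j}(g) = inf { |γ_i^α - γ_j^β| ‖ν‖₂ : α, β ∈ [0,1], ν ∈ ℝ^d, g = (1_i^α - 1_j^β) ν^T }`,
with the convention `inf ∅ = +∞` (in `EReal`, `sInf ∅ = ⊤`). -/
noncomputable def PhiIJ {k d : ℕ} (γ : Fin (k+1) → ℝ) (i j : Fin k)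
    (g : Fin k → Fin d → ℝ) : EReal :=
  sInf {c : EReal | ∃ α ∈ Set.Icc (0:ℝ) 1, ∃ β ∈ Set.Icc (0:ℝ) 1, ∃ ν : Fin d → ℝ,
    g = (fun m l => (liftvec i α m - liftvec j β m) * ν l) ∧
    c = ((|gammaAff γ i α - gammaAff γ j β| * enorm2 ν : ℝ) : EReal)}

/- ### Auxiliary lemmas -/

lemma enorm2_nonneg {d : ℕ} (x : Fin d → ℝ) : 0 ≤ enorm2 x := Real.sqrt_nonneg _

lemma enorm2_sq {d : ℕ} (x : Fin d → ℝ) : enorm2 x ^ 2 = ∑ l, x l ^ 2 := by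
  rw [enorm2, Real.sq_sqrt (by positivity)]

lemma enorm2_smul {d : ℕ} (t : ℝ) (w : Fin d → ℝ) :
    enorm2 (fun l => t * w l) = |t| * enorm2 w := by
  rw [enorm2, enorm2]
  have h : ∑ l, (t * w l) ^ 2 = t ^ 2 * ∑ l, w l ^ 2 := by
    rw [Finset.mul_sum]; exact Finset.sum_congr rfl fun l _ => by ring
  rw [h, Real.sqrt_mul (sq_nonneg t), Real.sqrt_sq_eq_abs]

lemma enorm2_cauchy {d : ℕ} (w v : Fin d → ℝ) :
    ∑ l, w l * v l ≤ enorm2 w * enorm2 v := by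
  have h := Finset.sum_mul_sq_le_sq_mul_sq Finset.univ w v
  calc ∑ l, w l * v l ≤ |∑ l, w l * v l| := le_abs_self _
    _ = Real.sqrt ((∑ l, w l * v l) ^ 2) := (Real.sqrt_sq_eq_abs _).symm
    _ ≤ Real.sqrt ((∑ l, w l ^ 2) * ∑ l, v l ^ 2) := Real.sqrt_le_sqrt h
    _ = enorm2 w * enorm2 v := Real.sqrt_mul (by positivity) _

lemma pairM_rank_one {k d : ℕ} (q : Fin k → Fin d → ℝ) (u : Fin k → ℝ) (ν : Fin d → ℝ) :
    pairM q (fun m l => u m * ν l) = ∑ l, matT q u l * ν l := by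
  unfold pairM matT
  rw [Finset.sum_comm]
  exact Finset.sum_congr rfl fun l _ => by
    rw [Finset.sum_mul]; exact Finset.sum_congr rfl fun m _ => by ring

lemma pairM_comm {k d : ℕ} (q g : Fin k → Fin d → ℝ) : pairM q g = pairM g q := by
  unfold pairM
  exact Finset.sum_congr rfl fun m _ => Finset.sum_congr rfl fun l _ => mul_comm _ _

lemma ereal_self_sub_self_nonpos (x : EReal) : x - x ≤ 0 := by
  induction x using EReal.rec with
  | bot => simp
  | coe r => rw [← EReal.coe_sub]; norm_num
  | top => simp

/-- If `q ∈ K`, the conjugate of `Φ` at `q` is `0`. -/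
lemma conj_Phi_mem {k d : ℕ} (hk : 1 ≤ k) (γ : Fin (k+1) → ℝ) (q : Fin k → Fin d → ℝ)
    (hq : ∀ i j : Fin k, j ≤ i → ∀ α ∈ Set.Icc (0:ℝ) 1, ∀ β ∈ Set.Icc (0:ℝ) 1,
      enorm2 (matT q (liftvec i α - liftvec j β)) ≤ |gammaAff γ i α - gammaAff γ j β|) :
    conjM (fun g' => ⨅ i : Fin k, ⨅ j : Fin k, ⨅ _ : j ≤ i, PhiIJ γ i j g') q = 0 := by
  · apply le_antisymm
    · apply iSup_le; intro g
      have hle : (pairM q g : EReal)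
          ≤ ⨅ i : Fin k, ⨅ j : Fin k, ⨅ _ : j ≤ i, PhiIJ γ i j g := by
        refine le_iInf fun i => le_iInf fun j => le_iInf fun hij => le_sInf ?_
        rintro c ⟨α, hα, β, hβ, ν, rfl, rfl⟩
        rw [pairM_rank_one q (fun m => liftvec i α m - liftvec j β m) ν]
        have hK : enorm2 (matT q (fun m => liftvec i α m - liftvec j β m))
            ≤ |gammaAff γ i α - gammaAff γ j β| := hq i j hij α hα β hβ
        have hfin : ∑ l, matT q (fun m => liftvec i α m - liftvec j β m) l * ν l
            ≤ |gammaAff γ i α - gammaAff γ j β| * enorm2 ν :=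
          le_trans (enorm2_cauchy _ ν) (mul_le_mul_of_nonneg_right hK (enorm2_nonneg ν))
        exact_mod_cast hfin
      calc (pairM q g : EReal) - _ ≤ _ - _ := EReal.sub_le_sub hle le_rfl
        _ ≤ 0 := ereal_self_sub_self_nonpos _
    · have i0 : Fin k := ⟨0, hk⟩
      have hΦ0 : (⨅ i : Fin k, ⨅ j : Fin k, ⨅ _ : j ≤ i,
          PhiIJ γ i j (0 : Fin k → Fin d → ℝ)) ≤ 0 := by
        refine le_trans
          (iInf_le_of_le i0 (iInf_le_of_le i0 (iInf_le_of_le le_rfl le_rfl))) ?_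
        apply sInf_le
        refine ⟨0, ⟨le_rfl, zero_le_one⟩, 0, ⟨le_rfl, zero_le_one⟩, 0, ?_, ?_⟩
        · funext m l; simp
        · simp [enorm2]
      refine le_iSup_of_le (0 : Fin k → Fin d → ℝ) ?_
      have hp0 : pairM q (0 : Fin k → Fin d → ℝ) = 0 := by simp [pairM]
      rw [hp0]
      calc (0 : EReal) = (0 : EReal) - 0 := by simp
        _ ≤ ((0:ℝ) : EReal) - _ := EReal.sub_le_sub (by simp) hΦ0

/-- If `q ∉ K`, the conjugate of `Φ` at `q` is `⊤`. -/
lemma conj_Phi_notMem {k d : ℕ} (γ : Fin (k+1) → ℝ) (q : Fin k → Fin d → ℝ)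
    (hq : ¬ ∀ i j : Fin k, j ≤ i → ∀ α ∈ Set.Icc (0:ℝ) 1, ∀ β ∈ Set.Icc (0:ℝ) 1,
      enorm2 (matT q (liftvec i α - liftvec j β)) ≤ |gammaAff γ i α - gammaAff γ j β|) :
    conjM (fun g' => ⨅ i : Fin k, ⨅ j : Fin k, ⨅ _ : j ≤ i, PhiIJ γ i j g') q = ⊤ := by
  · rw [conjM, iSup_eq_top]
    intro b hb
    push_neg at hq
    obtain ⟨i, j, hij, α, hα, β, hβ, hlt⟩ := hq
    set w : Fin d → ℝ := matT q (liftvec i α - liftvec j β) with hw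
    set W : ℝ := enorm2 w with hWdef
    set c : ℝ := |gammaAff γ i α - gammaAff γ j β| with hcdef
    have hc0 : 0 ≤ c := abs_nonneg _
    have hcW : c < W := hlt
    have hW0 : 0 < W := lt_of_le_of_lt hc0 hcW
    have hD : 0 < W * (W - c) := mul_pos hW0 (by linarith)
    obtain ⟨M, hbM, _⟩ := EReal.lt_iff_exists_real_btwn.mp hb
    set t : ℝ := max ((M + 1) / (W * (W - c))) 0 with htdef
    have ht0 : 0 ≤ t := le_max_right _ _
    have htD : M + 1 ≤ t * (W * (W - c)) := by
      have := le_max_left ((M + 1) / (W * (W - c))) 0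
      rw [div_le_iff₀ hD] at this
      linarith [this]
    refine ⟨fun m l => (liftvec i α m - liftvec j β m) * (t * w l), ?_⟩
    have hmT : matT q (fun m => liftvec i α m - liftvec j β m) = w := rfl
    have hpair : pairM q (fun m l => (liftvec i α m - liftvec j β m) * (t * w l))
        = t * W ^ 2 := by
      have h1 := pairM_rank_one q (fun m => liftvec i α m - liftvec j β m)
        (fun l => t * w l)
      rw [h1, hmT, hWdef, enorm2_sq, Finset.mul_sum]
      exact Finset.sum_congr rfl fun l _ => by ring
    have hΦt : (⨅ i' : Fin k, ⨅ j' : Fin k, ⨅ _ : j' ≤ i',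
        PhiIJ γ i' j' (fun m l => (liftvec i α m - liftvec j β m) * (t * w l)))
          ≤ ((c * (t * W) : ℝ) : EReal) := by
      refine le_trans
        (iInf_le_of_le i (iInf_le_of_le j (iInf_le_of_le hij le_rfl))) ?_
      apply sInf_le
      refine ⟨α, hα, β, hβ, fun l => t * w l, rfl, ?_⟩
      rw [enorm2_smul, abs_of_nonneg ht0, ← hWdef, ← hcdef]
    have hM : M < t * W ^ 2 - c * (t * W) := by nlinarith
    calc b < (M : EReal) := hbM
      _ ≤ ((t * W ^ 2 - c * (t * W) : ℝ) : EReal) := by exact_mod_cast le_of_lt hM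
      _ = ((t * W ^ 2 : ℝ) : EReal) - ((c * (t * W) : ℝ) : EReal) := EReal.coe_sub _ _
      _ ≤ _ - _ := EReal.sub_le_sub (by rw [hpair]) hΦt

/-- Proposition 4. With `Φ = min_{1 ≤ j ≤ i ≤ k} Φ_{i,j}`, the biconjugate of
`Φ` is the support function of the constraint set
`K = { q : ‖q^T (1_i^α - 1_j^β)‖₂ ≤ |γ_i^α - γ_j^β|, ∀ 1 ≤ j ≤ i ≤ k, ∀ α, β ∈ [0,1] }`:
`Φ^{**}(g) = sup_{q ∈ K} ⟨q, g⟩`. -/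
theorem biconj_Phi_eq_support {k d : ℕ} (hk : 1 ≤ k) (hd : 1 ≤ d) (γ : Fin (k+1) → ℝ)
    (hγ : StrictMono γ) (g : Fin k → Fin d → ℝ) :
    conjM (conjM (fun g' => ⨅ i : Fin k, ⨅ j : Fin k, ⨅ _ : j ≤ i, PhiIJ γ i j g')) g
      = ⨆ q ∈ {q : Fin k → Fin d → ℝ | ∀ i j : Fin k, j ≤ i →
            ∀ α ∈ Set.Icc (0:ℝ) 1, ∀ β ∈ Set.Icc (0:ℝ) 1,
              enorm2 (matT q (liftvec i α - liftvec j β)) ≤ |gammaAff γ i α - gammaAff γ j β|},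
          (pairM q g : EReal) := by
  have expand : conjM (conjM (fun g' => ⨅ i : Fin k, ⨅ j : Fin k, ⨅ _ : j ≤ i,
      PhiIJ γ i j g')) g
      = ⨆ x : Fin k → Fin d → ℝ, (pairM g x : EReal)
          - conjM (fun g' => ⨅ i : Fin k, ⨅ j : Fin k, ⨅ _ : j ≤ i, PhiIJ γ i j g') x := rfl
  rw [expand]
  refine iSup_congr fun x => ?_
  by_cases hx : (∀ i j : Fin k, j ≤ i → ∀ α ∈ Set.Icc (0:ℝ) 1, ∀ β ∈ Set.Icc (0:ℝ) 1,
      enorm2 (matT x (liftvec i α - liftvec j β)) ≤ |gammaAff γ i α - gammaAff γ j β|)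
  · rw [conj_Phi_mem hk γ x hx]
    simp only [Set.mem_setOf_eq]
    rw [iSup_pos hx, pairM_comm g x]
    simp
  · rw [conj_Phi_notMem γ x hx, EReal.sub_top]
    simp only [Set.mem_setOf_eq]
    rw [iSup_neg hx]
end
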